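/- Let p be a nonzero prime ideal of the ring of integers O of a number field K, let l ≥ 1, and let π ∈ p with π ∉ p². For every nonzero ideal 𝔞 of O, the image of 𝔞 in O/p^l (i.e. Ideal.map of 𝔞 under the quotient map O → O/p^l) equals the ideal generated by π̄^{min(v_p(𝔞), l)}, and it has exactly N(p)^{l - min(v_p(𝔞), l)} elements. -/
import Mathlib

open NumberField

/-- The exponent of the prime ideal `p` in the factorization of the nonzero ideal `a`:
the largest `n` such that `a ≤ p ^ n`. -/
noncomputable def idealPadicVal {K : Type*} [Field K] [NumberField K]
    (p a : Ideal (RingOfIntegers K)) : ℕ :=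
  sSup {n : ℕ | a ≤ p ^ n}

open UniqueFactorizationMonoid in
lemma idealPadicVal_eq_count {K : Type*} [Field K] [NumberField K]
    [DecidableEq (Ideal (RingOfIntegers K))]
    (p a : Ideal (RingOfIntegers K)) (hp : p ≠ ⊥) (hprime : p.IsPrime) (ha : a ≠ ⊥) :
    idealPadicVal p a = (normalizedFactors a).count p := by
  have hPrime : Prime p := (Ideal.prime_iff_isPrime hp).mpr hprime
  have key : ∀ n : ℕ, a ≤ p ^ n ↔ n ≤ (normalizedFactors a).count p := by
    intro n
    rw [← Ideal.dvd_iff_le, pow_dvd_iff_le_emultiplicity,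
      emultiplicity_eq_count_normalizedFactors hPrime.irreducible ha, normalize_eq,
      Nat.cast_le]
  have hset : {n : ℕ | a ≤ p ^ n} = Set.Iic ((normalizedFactors a).count p) := Set.ext key
  rw [idealPadicVal, hset, csSup_Iic]

set_option synthInstance.maxHeartbeats 1000000 in
set_option maxHeartbeats 1000000 in
open UniqueFactorizationMonoid in
theorem stmt_4 (K : Type*) [Field K] [NumberField K]
    (p : Ideal (RingOfIntegers K)) (hp : p ≠ ⊥) (hprime : p.IsPrime)
    (l : ℕ) (hl : 1 ≤ l)
    (π : RingOfIntegers K) (hπ : π ∈ p) (hπ2 : π ∉ p ^ 2)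
    (a : Ideal (RingOfIntegers K)) (ha : a ≠ ⊥) :
    Ideal.map (Ideal.Quotient.mk (p ^ l)) a =
        Ideal.span {(Ideal.Quotient.mk (p ^ l) π) ^ min (idealPadicVal p a) l} ∧
      Nat.card (Ideal.map (Ideal.Quotient.mk (p ^ l)) a) =
        Ideal.absNorm p ^ (l - min (idealPadicVal p a) l) := by
  classical
  have hPrime : Prime p := (Ideal.prime_iff_isPrime hp).mpr hprime
  set m : ℕ := min (idealPadicVal p a) l with hm
  have hml : m ≤ l := min_le_right _ _
  have hmap : ∀ b : Ideal (RingOfIntegers K), b ≠ ⊥ →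
      Ideal.map (Ideal.Quotient.mk (p ^ l)) b =
        Ideal.map (Ideal.Quotient.mk (p ^ l)) (p ^ min ((normalizedFactors b).count p) l) := by
    intro b hb
    have hsup : p ^ l ⊔ b = p ^ min ((normalizedFactors b).count p) l :=
      irreducible_pow_sup hb hPrime.irreducible l
    calc Ideal.map (Ideal.Quotient.mk (p ^ l)) b
        = Ideal.map (Ideal.Quotient.mk (p ^ l)) (p ^ l) ⊔
            Ideal.map (Ideal.Quotient.mk (p ^ l)) b := by
          rw [Ideal.map_quotient_self, bot_sup_eq]
      _ = Ideal.map (Ideal.Quotient.mk (p ^ l)) (p ^ l ⊔ b) := (Ideal.map_sup _ _ _).symm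
      _ = _ := by rw [hsup]
  have hπ0 : π ≠ 0 := fun h => hπ2 (by rw [h]; exact (p ^ 2).zero_mem)
  have hspanπ : (Ideal.span {π} : Ideal (RingOfIntegers K)) ≠ ⊥ := by
    simpa [Ideal.span_singleton_eq_bot] using hπ0
  have hcount1 :
      (normalizedFactors (Ideal.span {π} : Ideal (RingOfIntegers K))).count p = 1 := by
    refine Ideal.count_normalizedFactors_eq (n := 1) ?_ ?_
    · rw [pow_one]
      exact (Ideal.span_singleton_le_iff_mem p).mpr hπ
    · intro h
      exact hπ2 (h (Ideal.mem_span_singleton_self π))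
  have hcountm :
      (normalizedFactors ((Ideal.span {π} : Ideal (RingOfIntegers K)) ^ m)).count p = m := by
    rw [normalizedFactors_pow, Multiset.count_nsmul, hcount1, mul_one]
  have hva : (normalizedFactors a).count p = idealPadicVal p a :=
    (idealPadicVal_eq_count p a hp hprime ha).symm
  have key : Ideal.map (Ideal.Quotient.mk (p ^ l)) a =
      Ideal.map (Ideal.Quotient.mk (p ^ l)) (p ^ m) := by
    rw [hmap a ha, hva]
  have hspan : Ideal.span {(Ideal.Quotient.mk (p ^ l) π) ^ m} =
      Ideal.map (Ideal.Quotient.mk (p ^ l)) (Ideal.span {π} ^ m) := by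
    rw [Ideal.span_singleton_pow, Ideal.map_span, Set.image_singleton, map_pow]
  constructor
  · rw [key, hspan, hmap _ (pow_ne_zero _ hspanπ), hcountm, min_eq_left hml]
  · have hle : (p : Ideal (RingOfIntegers K)) ^ l ≤ p ^ m := Ideal.pow_le_pow_right hml
    have hcardmul := Submodule.card_quotient_mul_card_quotient (p ^ m) (p ^ l) hle
    have hsame : Nat.card (Ideal.map (Ideal.Quotient.mk (p ^ l)) (p ^ m)) =
        Nat.card (Submodule.map (Submodule.mkQ (p ^ l)) (p ^ m)) := by
      refine Nat.card_congr (Equiv.subtypeEquivRight fun x => ?_)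
      rw [Submodule.mem_map, Ideal.mem_map_iff_of_surjective _ Ideal.Quotient.mk_surjective]
      exact exists_congr fun y => and_congr_right fun _ => by rw [Submodule.mkQ_apply,
        Ideal.Quotient.mk_eq_mk]
    have hq : ∀ k : ℕ, Nat.card (RingOfIntegers K ⧸ p ^ k) = Ideal.absNorm p ^ k := by
      intro k
      rw [← Submodule.cardQuot_apply, ← Ideal.absNorm_apply, map_pow]
    have hN0 : Ideal.absNorm p ≠ 0 := by
      simpa [Ideal.absNorm_eq_zero_iff] using hp
    rw [hq, hq, ← hsame, ← key] at hcardmul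
    have hpow : Ideal.absNorm p ^ (l - m) * Ideal.absNorm p ^ m = Ideal.absNorm p ^ l := by
      rw [← pow_add, Nat.sub_add_cancel hml]
    refine Nat.eq_of_mul_eq_mul_right (Nat.pos_of_ne_zero (pow_ne_zero m hN0)) ?_
    rw [hcardmul, hpow]
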